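/- arXiv:1105.6267 — 4 statements merged into one kernel-verified Lean document; each statement's English description precedes it below -/
import Mathlib

section
/- The rational function f(t) = (1+t)^3 (1+t+...+t^{n-1}) / (1 - 8t + 8t^{n+1} - t^{n+2}) satisfies f(1/t) = -f(t) for every integer n ≥ 1 (as an identity of rational functions in t). -/
open Finset

/-! Multiplying numerator and denominator of `f(1/t)` by `t^(n+2)` turns the numerator back into
the numerator of `f(t)` (it is palindromic of degree `n + 2`) and the denominator into the negative
of the denominator of `f(t)` (it is anti-palindromic of degree `n + 2`). -/

section Reciprocal

variable {K : Type*} [Field K] {x : K}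

theorem pow_mul_geom_sum_inv (hx : x ≠ 0) (n : ℕ) :
    x ^ n * ∑ i ∈ range n, x⁻¹ ^ i = x * ∑ i ∈ range n, x ^ i := by
  induction n with
  | zero => simp
  | succ n ih =>
    calc x ^ (n + 1) * ∑ i ∈ range (n + 1), x⁻¹ ^ i
        = x * (x ^ n * ∑ i ∈ range n, x⁻¹ ^ i) + x * (x ^ n * x⁻¹ ^ n) := by
          rw [sum_range_succ]; ring
      _ = x * (x * ∑ i ∈ range n, x ^ i + 1) := by
          rw [ih, ← mul_pow, mul_inv_cancel₀ hx, one_pow]; ring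
      _ = x * ∑ i ∈ range (n + 1), x ^ i := by
          rw [sum_range_succ', mul_sum]; simp [pow_succ']

theorem pow_mul_growth_numerator_inv (hx : x ≠ 0) (n : ℕ) :
    x ^ (n + 2) * ((1 + x⁻¹) ^ 3 * ∑ i ∈ range n, x⁻¹ ^ i) =
      (1 + x) ^ 3 * ∑ i ∈ range n, x ^ i := by
  have hcube : x ^ 3 * (1 + x⁻¹) ^ 3 = (1 + x) ^ 3 := by
    rw [← mul_pow, mul_add, mul_inv_cancel₀ hx, mul_one, add_comm]
  calc x ^ (n + 2) * ((1 + x⁻¹) ^ 3 * ∑ i ∈ range n, x⁻¹ ^ i)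
      = x⁻¹ * (x ^ 3 * (1 + x⁻¹) ^ 3) * (x ^ n * ∑ i ∈ range n, x⁻¹ ^ i) := by
        field_simp; ring
    _ = (1 + x) ^ 3 * ∑ i ∈ range n, x ^ i := by
        rw [hcube, pow_mul_geom_sum_inv hx]; field_simp

theorem pow_mul_growth_denominator_inv (hx : x ≠ 0) (n : ℕ) :
    x ^ (n + 2) * (1 - 8 * x⁻¹ + 8 * x⁻¹ ^ (n + 1) - x⁻¹ ^ (n + 2)) =
      -(1 - 8 * x + 8 * x ^ (n + 1) - x ^ (n + 2)) := by
  simp only [inv_pow]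
  field_simp
  ring

end Reciprocal

theorem stmt_0_general (n : ℕ) :
    let t : RatFunc ℚ := RatFunc.X
    ((1 + t⁻¹) ^ 3 * (∑ i ∈ Finset.range n, (t⁻¹) ^ i)) /
        (1 - 8 * t⁻¹ + 8 * (t⁻¹) ^ (n + 1) - (t⁻¹) ^ (n + 2)) =
      -(((1 + t) ^ 3 * (∑ i ∈ Finset.range n, t ^ i)) /
        (1 - 8 * t + 8 * t ^ (n + 1) - t ^ (n + 2))) := by
  intro t
  have ht : t ≠ 0 := RatFunc.X_ne_zero
  rw [← mul_div_mul_left _ _ (pow_ne_zero (n + 2) ht), pow_mul_growth_numerator_inv ht,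
    pow_mul_growth_denominator_inv ht, div_neg]

/-- The growth function `f(t) = (1+t)^3 (1+t+⋯+t^{n-1}) / (1 - 8t + 8t^{n+1} - t^{n+2})`
of the Coxeter group of the dodecahedron `D_n` is anti-reciprocal: `f(1/t) = -f(t)`,
as an identity of rational functions. -/
theorem stmt_0 (n : ℕ) (hn : 1 ≤ n) :
    let t : RatFunc ℚ := RatFunc.X
    ((1 + t⁻¹) ^ 3 * (∑ i ∈ Finset.range n, (t⁻¹) ^ i)) /
        (1 - 8 * t⁻¹ + 8 * (t⁻¹) ^ (n + 1) - (t⁻¹) ^ (n + 2)) =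
      -(((1 + t) ^ 3 * (∑ i ∈ Finset.range n, t ^ i)) /
        (1 - 8 * t + 8 * t ^ (n + 1) - t ^ (n + 2))) :=
  stmt_0_general n
end

section
/- For every integer n ≥ 1, the polynomial 1 - 8t + 8t^{n+1} - t^{n+2} has a unique real root r_n in the open interval (0,1), and the sequence 1/r_n is strictly increasing in n and converges to 8 as n → ∞. -/
open Filter Finset Set Topology

/-!
Dividing by the root `t = 1` turns `1 - q t + q t^{n+1} - t^{n+2}` into
`g_n(t) = 1 + t^{n+1} - (q - 1)(t + ⋯ + t^n)`, which for `q > 3` is strictly decreasing on `[0, 1]`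
and changes sign there, so it has a single root `r_n` in `(0, 1)`. Since
`g_{n+1}(t) = g_n(t) - t^{n+1}(q - t)` we get `g_{n+1}(r_n) < 0`, hence `r_{n+1} < r_n`.
Finally `g_n(1/q) > 0` gives `1/q < r_n`, while the equation itself gives
`r_n ≤ 1/q + r_n^{n+1} ≤ 1/q + r_1^{n+1}`, so `r_n → 1/q`.
-/

noncomputable def growthDenom (q : ℝ) (n : ℕ) (t : ℝ) : ℝ :=
  1 - q * t + q * t ^ (n + 1) - t ^ (n + 2)

noncomputable def reducedGrowthDenom (q : ℝ) (n : ℕ) (t : ℝ) : ℝ :=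
  1 + t ^ (n + 1) - (q - 1) * ∑ k ∈ range n, t ^ (k + 1)

variable {q : ℝ} {n : ℕ}

theorem one_sub_mul_reducedGrowthDenom (q : ℝ) (n : ℕ) (t : ℝ) :
    (1 - t) * reducedGrowthDenom q n t = growthDenom q n t := by
  have hgeom : ∑ k ∈ range n, t ^ (k + 1) = t * ∑ k ∈ range n, t ^ k := by
    rw [mul_sum]; exact sum_congr rfl fun k _ => pow_succ' t k
  unfold reducedGrowthDenom growthDenom
  rw [hgeom]
  linear_combination ((q - 1) * t) * geom_sum_mul t n

theorem growthDenom_eq_zero_iff {t : ℝ} (ht : t ≠ 1) :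
    growthDenom q n t = 0 ↔ reducedGrowthDenom q n t = 0 := by
  rw [← one_sub_mul_reducedGrowthDenom, mul_eq_zero, sub_eq_zero, or_iff_right (Ne.symm ht)]

theorem reducedGrowthDenom_succ (q : ℝ) (n : ℕ) (t : ℝ) :
    reducedGrowthDenom q (n + 1) t = reducedGrowthDenom q n t - t ^ (n + 1) * (q - t) := by
  unfold reducedGrowthDenom
  rw [sum_range_succ]
  ring

theorem continuous_reducedGrowthDenom (q : ℝ) (n : ℕ) : Continuous (reducedGrowthDenom q n) := by
  unfold reducedGrowthDenom
  fun_prop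

theorem hasDerivAt_reducedGrowthDenom (q : ℝ) (n : ℕ) (t : ℝ) :
    HasDerivAt (reducedGrowthDenom q n)
      ((n + 1) * t ^ n - (q - 1) * ∑ k ∈ range n, (k + 1) * t ^ k) t := by
  have hpow (k : ℕ) : HasDerivAt (fun t : ℝ => t ^ (k + 1)) ((k + 1) * t ^ k) t := by
    simpa using hasDerivAt_pow (k + 1) t
  have hsum := HasDerivAt.fun_sum (u := range n) fun k _ => hpow k
  unfold reducedGrowthDenom
  simpa using ((hasDerivAt_const t 1).fun_add (hpow n)).fun_sub (hsum.const_mul (q - 1))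

theorem strictAntiOn_reducedGrowthDenom (hq : 3 ≤ q) (hn : 1 ≤ n) :
    StrictAntiOn (reducedGrowthDenom q n) (Icc 0 1) := by
  refine strictAntiOn_of_deriv_neg (convex_Icc 0 1)
    (continuous_reducedGrowthDenom q n).continuousOn fun t ht => ?_
  rw [interior_Icc] at ht
  obtain ⟨ht0, ht1⟩ := ht
  obtain ⟨m, rfl⟩ : ∃ m, n = m + 1 := ⟨n - 1, by omega⟩
  rw [(hasDerivAt_reducedGrowthDenom q _ t).deriv]
  -- only the top term `(m + 1) t^m` of the sum is needed to beat `(m + 2) t^{m+1}`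
  have htop : (m + 1) * t ^ m ≤ ∑ k ∈ range (m + 1), ((k : ℝ) + 1) * t ^ k := by
    rw [sum_range_succ]
    exact le_add_of_nonneg_left (sum_nonneg fun k _ => by positivity)
  have hpow : t ^ (m + 1) < t ^ m := pow_lt_pow_right_of_lt_one₀ ht0 ht1 (Nat.lt_succ_self m)
  have hsum : 2 * ((m + 1) * t ^ m) ≤ (q - 1) * ∑ k ∈ range (m + 1), ((k : ℝ) + 1) * t ^ k :=
    mul_le_mul (by linarith) htop (by positivity) (by linarith)
  have htail : ((m : ℝ) + 2) * t ^ (m + 1) < (m + 2) * t ^ m :=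
    mul_lt_mul_of_pos_left hpow (by positivity)
  push_cast
  linarith [mul_nonneg m.cast_nonneg (pow_pos ht0 m).le]

theorem exists_reducedGrowthDenom_eq_zero (hq : 3 < q) (hn : 1 ≤ n) :
    ∃ r ∈ Ioo (0 : ℝ) 1, reducedGrowthDenom q n r = 0 := by
  have h0 : reducedGrowthDenom q n 0 = 1 := by simp [reducedGrowthDenom]
  have h1 : reducedGrowthDenom q n 1 = 2 - (q - 1) * n := by
    simp [reducedGrowthDenom]; ring
  have hn' : (1 : ℝ) ≤ n := by exact_mod_cast hn
  refine intermediate_value_Ioo' zero_le_one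
    (continuous_reducedGrowthDenom q n).continuousOn ⟨?_, ?_⟩
  · rw [h1]; nlinarith
  · rw [h0]; exact one_pos

theorem existsUnique_growthDenom_eq_zero (hq : 3 < q) (hn : 1 ≤ n) :
    ∃! r : ℝ, r ∈ Ioo (0 : ℝ) 1 ∧ growthDenom q n r = 0 := by
  obtain ⟨r, hr, hgr⟩ := exists_reducedGrowthDenom_eq_zero hq hn
  refine ⟨r, ⟨hr, (growthDenom_eq_zero_iff hr.2.ne).2 hgr⟩, ?_⟩
  rintro s ⟨hs, hfs⟩
  exact (strictAntiOn_reducedGrowthDenom hq.le hn).injOn (Ioo_subset_Icc_self hs)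
    (Ioo_subset_Icc_self hr) (((growthDenom_eq_zero_iff hs.2.ne).1 hfs).trans hgr.symm)

theorem reducedGrowthDenom_inv_pos (hq : 1 < q) (n : ℕ) : 0 < reducedGrowthDenom q n q⁻¹ := by
  have hq0 : 0 < q := one_pos.trans hq
  have hinv : q⁻¹ < 1 := inv_lt_one_of_one_lt₀ hq
  have hval : growthDenom q n q⁻¹ = q⁻¹ ^ (n + 1) * (q - q⁻¹) := by
    unfold growthDenom
    rw [mul_inv_cancel₀ hq0.ne']
    ring
  have hpos : 0 < growthDenom q n q⁻¹ := by
    rw [hval]; exact mul_pos (by positivity) (by linarith)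
  rw [← one_sub_mul_reducedGrowthDenom] at hpos
  exact pos_of_mul_pos_right hpos (by linarith)

theorem le_inv_add_pow_of_growthDenom_eq_zero (hq : 0 < q) {t : ℝ} (ht : 0 ≤ t)
    (hroot : growthDenom q n t = 0) : t ≤ q⁻¹ + t ^ (n + 1) := by
  unfold growthDenom at hroot
  have hle : q * t ≤ q * (q⁻¹ + t ^ (n + 1)) := by
    rw [mul_add, mul_inv_cancel₀ hq.ne']
    nlinarith [pow_nonneg ht (n + 2)]
  exact le_of_mul_le_mul_left hle hq

section RootSequence

variable {r : ℕ → ℝ} (hq : 3 < q)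
  (hr : ∀ n : ℕ, 1 ≤ n → r n ∈ Ioo (0 : ℝ) 1 ∧ growthDenom q n (r n) = 0)
include hq hr

omit hq in
theorem reducedGrowthDenom_root (hn : 1 ≤ n) : reducedGrowthDenom q n (r n) = 0 :=
  (growthDenom_eq_zero_iff (hr n hn).1.2.ne).1 (hr n hn).2

theorem root_succ_lt (hn : 1 ≤ n) : r (n + 1) < r n := by
  have hneg : reducedGrowthDenom q (n + 1) (r n) < reducedGrowthDenom q (n + 1) (r (n + 1)) := by
    obtain ⟨hr0, hr1⟩ := (hr n hn).1
    rw [reducedGrowthDenom_succ, reducedGrowthDenom_root hr hn,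
      reducedGrowthDenom_root hr (by omega)]
    have : 0 < r n ^ (n + 1) * (q - r n) := mul_pos (by positivity) (by linarith)
    linarith
  exact ((strictAntiOn_reducedGrowthDenom hq.le (by omega)).lt_iff_gt
    (Ioo_subset_Icc_self (hr n hn).1) (Ioo_subset_Icc_self (hr (n + 1) (by omega)).1)).1 hneg

theorem root_lt_root {m : ℕ} (hm : 1 ≤ m) (hmn : m < n) : r n < r m := by
  induction n, hmn using Nat.le_induction with
  | base => exact root_succ_lt hq hr hm
  | succ n hn ih => exact (root_succ_lt hq hr (by omega)).trans ih

theorem inv_lt_root (hn : 1 ≤ n) : q⁻¹ < r n := by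
  have hinv : q⁻¹ ∈ Icc (0 : ℝ) 1 := ⟨by positivity, inv_le_one_of_one_le₀ (by linarith)⟩
  refine ((strictAntiOn_reducedGrowthDenom hq.le hn).lt_iff_gt
    (Ioo_subset_Icc_self (hr n hn).1) hinv).1 ?_
  rw [reducedGrowthDenom_root hr hn]
  exact reducedGrowthDenom_inv_pos (by linarith) n

theorem root_le_inv_add_pow (hn : 1 ≤ n) : r n ≤ q⁻¹ + r 1 ^ (n + 1) := by
  have hr0 := (hr n hn).1.1
  have hle : r n ≤ r 1 := by
    rcases hn.eq_or_lt with rfl | h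
    · rfl
    · exact (root_lt_root hq hr le_rfl h).le
  calc r n ≤ q⁻¹ + r n ^ (n + 1) :=
        le_inv_add_pow_of_growthDenom_eq_zero (by linarith) hr0.le (hr n hn).2
    _ ≤ q⁻¹ + r 1 ^ (n + 1) := by gcongr

theorem tendsto_root : Tendsto r atTop (𝓝 q⁻¹) := by
  obtain ⟨hr0, hr1⟩ := (hr 1 le_rfl).1
  have hpow : Tendsto (fun n : ℕ => q⁻¹ + r 1 ^ (n + 1)) atTop (𝓝 q⁻¹) := by
    simpa using tendsto_const_nhds.add
      ((tendsto_pow_atTop_nhds_zero_of_lt_one hr0.le hr1).comp (tendsto_add_atTop_nat 1))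
  refine tendsto_of_tendsto_of_tendsto_of_le_of_le' tendsto_const_nhds hpow ?_ ?_
  all_goals filter_upwards [eventually_ge_atTop 1] with n hn
  · exact (inv_lt_root hq hr hn).le
  · exact root_le_inv_add_pow hq hr hn

end RootSequence

/-- For every `n ≥ 1`, the polynomial `1 - 8t + 8t^{n+1} - t^{n+2}` has a unique real
root `r_n` in `(0,1)`; for any choice `r` of these roots, the sequence `1/r_n` is
strictly increasing in `n` and converges to `8`. -/
theorem stmt_2 :
    (∀ n : ℕ, 1 ≤ n →
      ∃! r : ℝ, r ∈ Set.Ioo (0 : ℝ) 1 ∧ 1 - 8 * r + 8 * r ^ (n + 1) - r ^ (n + 2) = 0) ∧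
    (∀ r : ℕ → ℝ,
      (∀ n : ℕ, 1 ≤ n →
        r n ∈ Set.Ioo (0 : ℝ) 1 ∧ 1 - 8 * r n + 8 * (r n) ^ (n + 1) - (r n) ^ (n + 2) = 0) →
      (∀ m n : ℕ, 1 ≤ m → m < n → 1 / r m < 1 / r n) ∧
      Tendsto (fun n => 1 / r n) atTop (nhds 8)) := by
  have h8 : (3 : ℝ) < 8 := by norm_num
  refine ⟨fun n hn => existsUnique_growthDenom_eq_zero h8 hn, fun r hr => ⟨?_, ?_⟩⟩
  · intro m n hm hmn
    exact one_div_lt_one_div_of_lt (hr n (by omega)).1.1 (root_lt_root h8 hr hm hmn)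
  · simpa using (tendsto_root h8 hr).inv₀ (by norm_num)
end

section
/- The polynomial p(t) = t^3 - 7t^2 - 9t - 9 is irreducible over the rationals, has a real root τ > 1, and its other two roots are non-real complex conjugates whose product exceeds 1. In particular, τ is neither a Salem number nor a Pisot number. -/
/-!
The rational root theorem reduces irreducibility to the absence of integer roots, and there are
none even modulo 5. The intermediate value theorem gives a root `τ ∈ (41/5, 9)`; dividing by
`X - τ` leaves `X² + (τ - 7) X + (τ² - 7τ - 9)`, whose discriminant `-(3τ² - 14τ - 85)` is
negative once `τ > 41/5`. Its two roots are therefore a conjugate pair with product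
`τ² - 7τ - 9 = 9 / τ`, which exceeds `1` because `τ < 9`.
-/

open Polynomial ComplexConjugate Set

theorem Complex.exists_quadratic_eq_mul_conj {β γ : ℝ} (h : β ^ 2 < 4 * γ) :
    ∃ z : ℂ, z.im ≠ 0 ∧ z * conj z = γ ∧
      (X ^ 2 + C (β : ℂ) * X + C (γ : ℂ) : ℂ[X]) = (X - C z) * (X - C (conj z)) := by
  set δ := √(4 * γ - β ^ 2)
  have hδ : δ ^ 2 = 4 * γ - β ^ 2 := Real.sq_sqrt (by linarith)
  have hδ_pos : 0 < δ := Real.sqrt_pos.mpr (by linarith)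
  have hnormSq : Complex.normSq ⟨-β / 2, δ / 2⟩ = γ := by
    rw [Complex.normSq_mk]; linear_combination hδ / 4
  refine ⟨⟨-β / 2, δ / 2⟩, by simpa using hδ_pos.ne', by rw [Complex.mul_conj, hnormSq], ?_⟩
  have hsum : (⟨-β / 2, δ / 2⟩ : ℂ) + conj ⟨-β / 2, δ / 2⟩ = -β := by
    rw [Complex.add_conj]; push_cast; ring
  have vieta : ∀ z w : ℂ, (X - C z) * (X - C w) = X ^ 2 - C (z + w) * X + C (z * w) := by
    intro z w; simp only [map_add, map_mul]; ring
  rw [vieta, hsum, Complex.mul_conj, hnormSq, map_neg]; ring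

theorem Polynomial.roots_X_sub_C_mul_X_sub_C_mul_X_sub_C {R : Type*} [CommRing R] [IsDomain R]
    (a b c : R) : ((X - C a) * ((X - C b) * (X - C c))).roots = {a, b, c} := by
  simpa using roots_multiset_prod_X_sub_C ({a, b, c} : Multiset R)

namespace IdealDodecahedron

noncomputable def p : ℚ[X] := X ^ 3 - 7 * X ^ 2 - 9 * X - 9

theorem aeval_p {A : Type*} [CommRing A] [Algebra ℚ A] (x : A) :
    aeval x p = x ^ 3 - 7 * x ^ 2 - 9 * x - 9 := by
  simp only [p, map_sub, map_mul, map_pow, aeval_X, map_ofNat]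

theorem natDegree_p : p.natDegree = 3 := by
  unfold p; compute_degree!

theorem p_ne_zero : p ≠ 0 := by
  intro h; simpa [h] using natDegree_p

theorem int_cubic_ne_zero (m : ℤ) : m ^ 3 - 7 * m ^ 2 - 9 * m - 9 ≠ 0 := by
  intro h
  have h5 : (m : ZMod 5) ^ 3 - 7 * (m : ZMod 5) ^ 2 - 9 * (m : ZMod 5) - 9 = 0 := by
    exact_mod_cast congrArg (Int.cast : ℤ → ZMod 5) h
  generalize (m : ZMod 5) = x at h5
  revert x h5
  decide

theorem rat_cubic_ne_zero (q : ℚ) : q ^ 3 - 7 * q ^ 2 - 9 * q - 9 ≠ 0 := by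
  intro h
  have hmonic : ((X : ℤ[X]) ^ 3 - 7 * X ^ 2 - 9 * X - 9).Monic := by monicity!
  obtain ⟨m, rfl⟩ := isInteger_of_is_root_of_monic hmonic (r := q) <| by
    simp only [map_sub, map_mul, map_pow, aeval_X, map_ofNat]; exact h
  rw [algebraMap_int_eq, eq_intCast] at h
  exact int_cubic_ne_zero m (by exact_mod_cast h)

theorem irreducible_p : Irreducible p := by
  rw [irreducible_iff_roots_eq_zero_of_degree_le_three (by rw [natDegree_p]; omega)
    (by rw [natDegree_p]), Multiset.eq_zero_iff_forall_notMem]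
  intro q hq
  exact rat_cubic_ne_zero q (by simpa [p] using (mem_roots'.mp hq).2)

theorem exists_real_root : ∃ τ ∈ Ioo (41 / 5 : ℝ) 9, τ ^ 3 - 7 * τ ^ 2 - 9 * τ - 9 = 0 := by
  have hcont : ContinuousOn (fun x : ℝ => x ^ 3 - 7 * x ^ 2 - 9 * x - 9) (Icc (41 / 5) 9) := by
    fun_prop
  exact intermediate_value_Ioo (by norm_num) hcont (by norm_num)

theorem cubic_eq_mul_quadratic {R : Type*} [CommRing R] {τ : R}
    (hτ : τ ^ 3 - 7 * τ ^ 2 - 9 * τ - 9 = 0) :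
    (X ^ 3 - 7 * X ^ 2 - 9 * X - 9 : R[X]) =
      (X - C τ) * (X ^ 2 + C (τ - 7) * X + C (τ ^ 2 - 7 * τ - 9)) := by
  have hτ' := congrArg C hτ
  simp only [map_sub, map_mul, map_pow, map_ofNat, map_zero] at hτ' ⊢
  linear_combination hτ'

theorem exists_roots_map_complex_eq {τ : ℝ} (hτ : τ ∈ Ioo (41 / 5 : ℝ) 9)
    (hroot : τ ^ 3 - 7 * τ ^ 2 - 9 * τ - 9 = 0) :
    ∃ z : ℂ, z.im ≠ 0 ∧ z * conj z = (τ ^ 2 - 7 * τ - 9 : ℝ) ∧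
      (p.map (algebraMap ℚ ℂ)).roots = {(τ : ℂ), z, conj z} := by
  have hdisc : (τ - 7) ^ 2 < 4 * (τ ^ 2 - 7 * τ - 9) := by nlinarith [hτ.1]
  obtain ⟨z, hz_im, hz_mul, hfactor⟩ := Complex.exists_quadratic_eq_mul_conj hdisc
  refine ⟨z, hz_im, hz_mul, ?_⟩
  have hmap : p.map (algebraMap ℚ ℂ) = X ^ 3 - 7 * X ^ 2 - 9 * X - 9 := by simp [p]
  push_cast at hfactor
  rw [hmap, cubic_eq_mul_quadratic (τ := (τ : ℂ)) (by exact_mod_cast hroot), hfactor,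
    roots_X_sub_C_mul_X_sub_C_mul_X_sub_C]

theorem aeval_eq_zero_of_mem_roots_map {w : ℂ} (hw : w ∈ (p.map (algebraMap ℚ ℂ)).roots) :
    aeval w p = 0 :=
  (mem_roots_map_of_injective (algebraMap ℚ ℂ).injective p_ne_zero).mp hw

end IdealDodecahedron

open IdealDodecahedron

/-- The polynomial `p(t) = t^3 - 7t^2 - 9t - 9` is irreducible over `ℚ`, has a real root
`τ > 1`, and its other two roots are non-real complex conjugates whose product exceeds `1`.
In particular `τ` is neither a Salem number nor a Pisot number. -/
theorem stmt_9 :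
    Irreducible ((X : ℚ[X]) ^ 3 - 7 * X ^ 2 - 9 * X - 9) ∧
    ∃ τ : ℝ, 1 < τ ∧ aeval τ ((X : ℚ[X]) ^ 3 - 7 * X ^ 2 - 9 * X - 9) = 0 ∧
      ∃ z : ℂ, z.im ≠ 0 ∧
        aeval z ((X : ℚ[X]) ^ 3 - 7 * X ^ 2 - 9 * X - 9) = 0 ∧
        aeval (starRingEnd ℂ z) ((X : ℚ[X]) ^ 3 - 7 * X ^ 2 - 9 * X - 9) = 0 ∧
        1 < ‖z * starRingEnd ℂ z‖ ∧
        (((X : ℚ[X]) ^ 3 - 7 * X ^ 2 - 9 * X - 9).map (algebraMap ℚ ℂ)).roots =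
          {(τ : ℂ), z, starRingEnd ℂ z} := by
  obtain ⟨τ, hτ, hroot⟩ := exists_real_root
  obtain ⟨z, hz_im, hz_mul, hroots⟩ := exists_roots_map_complex_eq hτ hroot
  have hprod : 1 < τ ^ 2 - 7 * τ - 9 := by nlinarith [hτ.1, hτ.2]
  refine ⟨irreducible_p, τ, by linarith [hτ.1], (aeval_p τ).trans hroot,
    z, hz_im,
    aeval_eq_zero_of_mem_roots_map (by simp [hroots]),
    aeval_eq_zero_of_mem_roots_map (by simp [hroots]), ?_, hroots⟩
  rwa [hz_mul, Complex.norm_real, Real.norm_of_nonneg (by linarith)]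
end

section
/- Suppose F∞(t) + F∞(1/t) = ((t-1)/(t+1))^2 where F∞(t) = t(t-1)P∞(t)/Q∞(t), Q∞ satisfies Q∞(t) = t^{deg Q∞} Q∞(1/t), and deg Q∞ - deg P∞ = 2. Then for every n, the polynomial P(t) := t^{n+1} P∞(t) - t^{deg P∞} P∞(1/t) satisfies (t-1)P(t)/((t^n-1)Q∞(t)) - t(t-1)P∞(t)/Q∞(t) = (1/(t^n-1))·((t-1)/(t+1))^2 as rational functions. -/
open Polynomial

/-- Suppose `F∞(t) + F∞(1/t) = ((t-1)/(t+1))^2` where `F∞(t) = t(t-1)P∞(t)/Q∞(t)`,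
`Q∞` is self-reciprocal, and `deg Q∞ - deg P∞ = 2`. Then for every `n ≥ 1` the polynomial
`P(t) = t^{n+1} P∞(t) - t^{deg P∞} P∞(1/t)` satisfies
`(t-1)P(t)/((t^n-1)Q∞(t)) - t(t-1)P∞(t)/Q∞(t) = (1/(t^n-1))((t-1)/(t+1))^2`. -/
theorem stmt_11 (Pinf Qinf : ℝ[X]) (hQ0 : Qinf ≠ 0)
    (hdeg : Qinf.natDegree = Pinf.natDegree + 2)
    (hQrec :
      aeval (RatFunc.X : RatFunc ℝ) Qinf =
        (RatFunc.X : RatFunc ℝ) ^ Qinf.natDegree * aeval (RatFunc.X : RatFunc ℝ)⁻¹ Qinf)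
    (hF :
      (RatFunc.X * (RatFunc.X - 1) * aeval (RatFunc.X : RatFunc ℝ) Pinf) /
          aeval (RatFunc.X : RatFunc ℝ) Qinf +
        ((RatFunc.X : RatFunc ℝ)⁻¹ * ((RatFunc.X : RatFunc ℝ)⁻¹ - 1) *
            aeval (RatFunc.X : RatFunc ℝ)⁻¹ Pinf) / aeval (RatFunc.X : RatFunc ℝ)⁻¹ Qinf =
        ((RatFunc.X - 1) / (RatFunc.X + 1)) ^ 2) :
    ∀ n : ℕ, 1 ≤ n →
      ((RatFunc.X - 1) *
          ((RatFunc.X : RatFunc ℝ) ^ (n + 1) * aeval (RatFunc.X : RatFunc ℝ) Pinf -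
            (RatFunc.X : RatFunc ℝ) ^ Pinf.natDegree * aeval (RatFunc.X : RatFunc ℝ)⁻¹ Pinf)) /
          (((RatFunc.X : RatFunc ℝ) ^ n - 1) * aeval (RatFunc.X : RatFunc ℝ) Qinf) -
        (RatFunc.X * (RatFunc.X - 1) * aeval (RatFunc.X : RatFunc ℝ) Pinf) /
          aeval (RatFunc.X : RatFunc ℝ) Qinf =
        (1 / ((RatFunc.X : RatFunc ℝ) ^ n - 1)) * ((RatFunc.X - 1) / (RatFunc.X + 1)) ^ 2 := by
  intro n hn
  set A := aeval (RatFunc.X : RatFunc ℝ) Pinf with hA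
  set A' := aeval (RatFunc.X : RatFunc ℝ)⁻¹ Pinf with hA'
  set B := aeval (RatFunc.X : RatFunc ℝ) Qinf with hB
  set B' := aeval (RatFunc.X : RatFunc ℝ)⁻¹ Qinf with hB'
  have key : ∀ p : ℝ[X], aeval (RatFunc.X : RatFunc ℝ) p = algebraMap ℝ[X] (RatFunc ℝ) p := by
    intro p
    rw [← RatFunc.algebraMap_X, aeval_algebraMap_apply, aeval_X_left_apply]
  have hX : (RatFunc.X : RatFunc ℝ) ≠ 0 := RatFunc.X_ne_zero
  have hBne : B ≠ 0 := by
    rw [hB, key]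
    exact RatFunc.algebraMap_ne_zero hQ0
  have hB'ne : B' ≠ 0 := by
    intro h
    exact hBne (by rw [hQrec, h, mul_zero])
  have hXn : (RatFunc.X : RatFunc ℝ) ^ n - 1 ≠ 0 := by
    have h1 : (RatFunc.X : RatFunc ℝ) ^ n - 1 =
        algebraMap ℝ[X] (RatFunc ℝ) (Polynomial.X ^ n - 1) := by
      simp [map_sub, map_pow, RatFunc.algebraMap_X]
    rw [h1]
    apply RatFunc.algebraMap_ne_zero
    intro h
    have h2 := congrArg (Polynomial.eval 0) h
    simp [zero_pow (by omega : n ≠ 0)] at h2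
  have hX1 : (RatFunc.X : RatFunc ℝ) + 1 ≠ 0 := by
    have h1 : (RatFunc.X : RatFunc ℝ) + 1 =
        algebraMap ℝ[X] (RatFunc ℝ) (Polynomial.X + 1) := by
      simp [map_add, RatFunc.algebraMap_X]
    rw [h1]
    apply RatFunc.algebraMap_ne_zero
    intro h
    have h2 := congrArg (Polynomial.eval 0) h
    simp at h2
  rw [hdeg] at hQrec
  have h2 : (RatFunc.X - 1) * (RatFunc.X * A - (RatFunc.X : RatFunc ℝ) ^ Pinf.natDegree * A') / B =
      RatFunc.X * (RatFunc.X - 1) * A / B +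
        (RatFunc.X : RatFunc ℝ)⁻¹ * ((RatFunc.X : RatFunc ℝ)⁻¹ - 1) * A' / B' := by
    rw [hQrec]
    field_simp
    ring
  have hkey : (RatFunc.X - 1) * (RatFunc.X * A - (RatFunc.X : RatFunc ℝ) ^ Pinf.natDegree * A') / B =
      ((RatFunc.X - 1) / (RatFunc.X + 1)) ^ 2 := h2.trans hF
  have h3 :
      ((RatFunc.X - 1) *
          ((RatFunc.X : RatFunc ℝ) ^ (n + 1) * A - (RatFunc.X : RatFunc ℝ) ^ Pinf.natDegree * A')) /
          (((RatFunc.X : RatFunc ℝ) ^ n - 1) * B) - RatFunc.X * (RatFunc.X - 1) * A / B =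
        (1 / ((RatFunc.X : RatFunc ℝ) ^ n - 1)) *
          ((RatFunc.X - 1) * (RatFunc.X * A - (RatFunc.X : RatFunc ℝ) ^ Pinf.natDegree * A') / B) := by
    field_simp
    ring
  rw [h3, hkey]
end
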